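/- A stability condition σ on a Krull–Schmidt triangulated category D is totally semistable (every indecomposable object is semistable) if and only if gldim σ ≤ 1. -/

import Mathlib

open CategoryTheory CategoryTheory.Limits CategoryTheory.Pretriangulated

universe v u

variable (C : Type u) [Category.{v} C] [Preadditive C] [HasZeroObject C]
  [HasShift C ℤ] [∀ n : ℤ, (shiftFunctor C n).Additive] [Pretriangulated C]
  [HasFiniteBiproducts C]

/-- A Bridgeland stability condition, encoded by a central charge on objects and a slicing. -/
structure StabilityCondition where
  Z : C → ℂ
  P : ℝ → Set C
  mem_of_iso : ∀ {φ : ℝ} {E F : C}, (E ≅ F) → E ∈ P φ → F ∈ P φ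
  charge : ∀ {φ : ℝ} {E : C}, E ∈ P φ → ¬ IsZero E →
    ∃ m : ℝ, 0 < m ∧ Z E = (m : ℂ) * Complex.exp (Real.pi * φ * Complex.I)
  shift_mem : ∀ (φ : ℝ) (E : C), E ∈ P φ ↔ E⟦(1 : ℤ)⟧ ∈ P (φ + 1)
  sum_mem : ∀ {φ : ℝ} {X Y : C}, X ∈ P φ → Y ∈ P φ → (X ⊞ Y) ∈ P φ
  summand_mem : ∀ {φ : ℝ} {X Y : C}, (X ⊞ Y) ∈ P φ → X ∈ P φ
  hom_zero : ∀ {φ₁ φ₂ : ℝ}, φ₂ < φ₁ → ∀ {E F : C}, E ∈ P φ₁ → F ∈ P φ₂ →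
    ∀ f : E ⟶ F, f = 0
  HN : ∀ E : C, ¬ IsZero E → ∃ (n : ℕ) (obj : Fin (n + 1) → C) (φ : Fin n → ℝ),
    IsZero (obj 0) ∧ Nonempty (obj (Fin.last n) ≅ E) ∧ StrictAnti φ ∧
    ∀ i : Fin n, ∃ (A : C) (f : obj i.castSucc ⟶ obj i.succ) (g : obj i.succ ⟶ A)
      (h : A ⟶ (obj i.castSucc)⟦(1 : ℤ)⟧),
      (Triangle.mk f g h ∈ distTriang C) ∧ A ∈ P (φ i) ∧ ¬ IsZero A

variable {C}

/-- `E` is semistable iff it lies in some slice. -/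
def StabilityCondition.IsSemistable (σ : StabilityCondition C) (E : C) : Prop :=
  ∃ φ : ℝ, E ∈ σ.P φ

/-- The global dimension of a stability condition. -/
noncomputable def StabilityCondition.gldim (σ : StabilityCondition C) : EReal :=
  sSup {d : EReal | ∃ (φ₁ φ₂ : ℝ) (E F : C) (f : E ⟶ F),
    E ∈ σ.P φ₁ ∧ F ∈ σ.P φ₂ ∧ f ≠ 0 ∧ d = ((φ₂ - φ₁ : ℝ) : EReal)}

/-- An object is indecomposable if it is nonzero and any biproduct decomposition is trivial. -/
def IsIndec (E : C) : Prop :=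
  ¬ IsZero E ∧ ∀ (X Y : C), (E ≅ X ⊞ Y) → IsZero X ∨ IsZero Y

/-- `E` is stable of phase `φ`: it is a nonzero object of `P(φ)` admitting no nontrivial
extension decomposition inside `P(φ)` (i.e. it is simple in the abelian category `P(φ)`). -/
def StabilityCondition.IsStableOfPhase (σ : StabilityCondition C) (E : C) (φ : ℝ) : Prop :=
  E ∈ σ.P φ ∧ ¬ IsZero E ∧ ∀ (A B : C) (f : A ⟶ E) (g : E ⟶ B) (h : B ⟶ A⟦(1 : ℤ)⟧),
    (Triangle.mk f g h ∈ distTriang C) → A ∈ σ.P φ → B ∈ σ.P φ →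
    ¬ IsZero A → ¬ IsZero B → False

/-- The Krull–Schmidt property: every nonzero object is a finite biproduct of indecomposables. -/
def KrullSchmidt : Prop :=
  ∀ X : C, ¬ IsZero X → ∃ (m : ℕ) (f : Fin m → C),
    (∀ i, IsIndec (f i)) ∧ Nonempty (X ≅ ⨁ f)

/-!
If `gldim σ ≤ 1`, the last Harder–Narasimhan factor `A` of `E` (phase `φ`) admits no nonzero
map to `E'⟦1⟧`, where `E'` is the rest of the filtration: the factors of `E'⟦1⟧` have phases
`> φ + 1`. So the last HN triangle splits, and an indecomposable `E` is isomorphic to `A`.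

Conversely, let `f : E ⟶ F` with `E ∈ P(φ₁)`, `F ∈ P(φ₂)`, `φ₂ > φ₁ + 1`, and complete it to a
triangle `E ⟶ F ⟶ G ⟶ E⟦1⟧`. Each indecomposable summand of `G` is semistable, so either it
receives no map from `F` (the projection onto it factors through `h : G ⟶ E⟦1⟧`) or it maps
trivially to `E⟦1⟧`. Hence `h ≫ w ≫ h = h` for some `w`, and since `Hom(F⟦1⟧, E⟦1⟧) = 0` this
forces `w ≫ h = 𝟙`; `h` is split epi, so `f = 0`.
-/

omit [HasFiniteBiproducts C] in
lemma hom_obj₂_eq_zero_of_distTriang {T : Triangle C}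
    (hT : T ∈ distTriang C) {X : C} (h₁ : ∀ a : X ⟶ T.obj₁, a = 0)
    (h₃ : ∀ a : X ⟶ T.obj₃, a = 0) (a : X ⟶ T.obj₂) : a = 0 := by
  obtain ⟨b, rfl⟩ := T.coyoneda_exact₂ hT a (h₃ _)
  rw [h₁ b, zero_comp]

omit [HasFiniteBiproducts C] in
lemma mor₁_eq_zero_of_distTriang_of_mor₃_regular {T : Triangle C}
    (hT : T ∈ distTriang C) (hreg : ∃ w, T.mor₃ ≫ w ≫ T.mor₃ = T.mor₃)
    (hvan : ∀ d : T.obj₂⟦(1 : ℤ)⟧ ⟶ T.obj₁⟦(1 : ℤ)⟧, d = 0) : T.mor₁ = 0 := by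
  obtain ⟨w, hw⟩ := hreg
  have hker : T.mor₃ ≫ (𝟙 (T.obj₁⟦(1 : ℤ)⟧) - w ≫ T.mor₃) = 0 := by
    rw [Preadditive.comp_sub, Category.comp_id, hw, sub_self]
  obtain ⟨d, hd⟩ := Triangle.yoneda_exact₃ _ (rot_of_distTriang _ hT) _ hker
  have hsection : w ≫ T.mor₃ = 𝟙 _ := by
    rw [hvan d] at hd
    exact (sub_eq_zero.1 (hd.trans comp_zero)).symm
  have : IsSplitEpi T.mor₃ := ⟨⟨w, hsection⟩⟩
  exact T.mor₁_eq_zero_of_epi₃ hT inferInstance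

omit [HasFiniteBiproducts C] in
lemma hom_shift_eq_zero_of_filtration {X : C} (s : ℤ) {n : ℕ} (obj : Fin (n + 1) → C)
    (h₀ : IsZero (obj 0))
    (hstep : ∀ i : Fin n, ∃ (A : C) (f : obj i.castSucc ⟶ obj i.succ) (g : obj i.succ ⟶ A)
      (h : A ⟶ (obj i.castSucc)⟦(1 : ℤ)⟧),
      Triangle.mk f g h ∈ distTriang C ∧ ∀ a : X ⟶ A⟦s⟧, a = 0)
    (k : Fin (n + 1)) (a : X ⟶ (obj k)⟦s⟧) : a = 0 := by
  induction k using Fin.induction with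
  | zero => exact ((shiftFunctor C s).map_isZero h₀).eq_of_tgt a 0
  | succ i ih =>
    obtain ⟨A, f, g, h, hT, hA⟩ := hstep i
    exact hom_obj₂_eq_zero_of_distTriang (Triangle.shift_distinguished _ hT s) ih hA a

lemma exists_comp_comp_self_eq_self_of_decomposition {D : Type*} [Category D] [Preadditive D]
    {G Y : D} {ι : Type*} [Fintype ι] {Gᵢ : ι → D} (p : ∀ i, G ⟶ Gᵢ i) (q : ∀ i, Gᵢ i ⟶ G)
    (hpq : ∑ i, p i ≫ q i = 𝟙 G) (h : G ⟶ Y) (hh : ∀ i, q i ≫ h = 0 ∨ ∃ v, p i = h ≫ v) :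
    ∃ w, h ≫ w ≫ h = h := by
  have hv : ∀ i, ∃ v : Y ⟶ Gᵢ i, p i ≫ q i ≫ h = h ≫ v ≫ q i ≫ h := by
    intro i
    rcases hh i with h₀ | ⟨v, hv⟩
    · exact ⟨0, by simp [h₀]⟩
    · exact ⟨v, by simp [hv]⟩
  choose v hv using hv
  refine ⟨∑ i, v i ≫ q i, ?_⟩
  calc h ≫ (∑ i, v i ≫ q i) ≫ h = ∑ i, h ≫ v i ≫ q i ≫ h := by
        simp [Preadditive.sum_comp, Preadditive.comp_sum]
    _ = ∑ i, p i ≫ q i ≫ h := Finset.sum_congr rfl fun i _ => (hv i).symm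
    _ = (∑ i, p i ≫ q i) ≫ h := by simp only [Preadditive.sum_comp, Category.assoc]
    _ = h := by rw [hpq, Category.id_comp]

namespace StabilityCondition

variable (σ : StabilityCondition C)

omit [HasFiniteBiproducts C] in
lemma gldim_le_iff (r : ℝ) :
    σ.gldim ≤ r ↔ ∀ ⦃φ₁ φ₂ : ℝ⦄ ⦃E F : C⦄, E ∈ σ.P φ₁ → F ∈ σ.P φ₂ → r < φ₂ - φ₁ →
      ∀ f : E ⟶ F, f = 0 := by
  constructor
  · intro hσ φ₁ φ₂ E F hE hF hgap f
    by_contra hf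
    have hle := (le_sSup ⟨φ₁, φ₂, E, F, f, hE, hF, hf, rfl⟩ : _ ≤ σ.gldim).trans hσ
    exact (EReal.coe_le_coe_iff.1 hle).not_gt hgap
  · intro hvan
    refine sSup_le ?_
    rintro _ ⟨φ₁, φ₂, E, F, f, hE, hF, hf, rfl⟩
    exact EReal.coe_le_coe_iff.2 (not_lt.1 fun hgap => hf (hvan hE hF hgap f))

omit [HasFiniteBiproducts C] in
lemma isSemistable_of_isIndec_of_gldim_le_one (hσ : σ.gldim ≤ 1) {E : C} (hE : IsIndec E) :
    σ.IsSemistable E := by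
  have hvan := (σ.gldim_le_iff 1).1 (by exact_mod_cast hσ)
  obtain ⟨n, obj, φ, h₀, ⟨eE⟩, hφ, htri⟩ := σ.HN E hE.1
  cases n with
  | zero => exact absurd (h₀.of_iso eE.symm) hE.1
  | succ m =>
    obtain ⟨A, f, g, h, hT, hA, hA₀⟩ := htri (Fin.last m)
    have hh : h = 0 := by
      refine hom_shift_eq_zero_of_filtration 1 (fun k : Fin (m + 1) => obj k.castSucc) h₀
        (fun i => ?_) (Fin.last m) h
      obtain ⟨A', f', g', h', hT', hA', -⟩ := htri i.castSucc
      have hlt := hφ (Fin.castSucc_lt_last i)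
      exact ⟨A', f', g', h', hT', hvan hA ((σ.shift_mem _ _).1 hA') (by linarith)⟩
    obtain ⟨e, -, -⟩ := exists_iso_binaryBiproduct_of_distTriang _ hT hh
    rcases hE.2 _ _ (eE.symm ≪≫ e) with hX | hX
    · exact ⟨_, σ.mem_of_iso (isoZeroBiprod hX ≪≫ (eE.symm ≪≫ e).symm) hA⟩
    · exact absurd hX hA₀

lemma gldim_le_one_of_totally_semistable (hKS : KrullSchmidt (C := C))
    (hss : ∀ E : C, IsIndec E → σ.IsSemistable E) : σ.gldim ≤ 1 := by
  refine (σ.gldim_le_iff 1).2 fun φ₁ φ₂ E F hE hF hgap f => ?_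
  obtain ⟨G, g, h, hT⟩ := distinguished_cocone_triangle f
  refine mor₁_eq_zero_of_distTriang_of_mor₃_regular hT ?_
    fun d => σ.hom_zero (by linarith) ((σ.shift_mem _ _).1 hF) ((σ.shift_mem _ _).1 hE) d
  by_cases hG : IsZero G
  · exact ⟨0, hG.eq_of_src _ _⟩
  obtain ⟨m, Gᵢ, hind, ⟨e⟩⟩ := hKS G hG
  refine exists_comp_comp_self_eq_self_of_decomposition (fun i => e.hom ≫ biproduct.π Gᵢ i)
    (fun i => biproduct.ι Gᵢ i ≫ e.inv) ?_ h fun i => ?_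
  · simp only [Category.assoc, ← Preadditive.comp_sum]
    simp only [← Category.assoc (biproduct.π _ _), ← Preadditive.sum_comp, biproduct.total,
      Category.id_comp, Iso.hom_inv_id]
  obtain ⟨ψ, hψ⟩ := hss _ (hind i)
  rcases le_or_gt ψ (φ₁ + 1) with hle | hlt
  · exact .inr (Triangle.yoneda_exact₃ _ hT _ (σ.hom_zero (by linarith) hF hψ _))
  · exact .inl (σ.hom_zero hlt hψ ((σ.shift_mem _ _).1 hE) _)

end StabilityCondition

/-- `σ` is totally semistable iff `gldim σ ≤ 1`. -/
theorem totally_semistable_iff_gldim_le_one (hKS : KrullSchmidt (C := C))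
    (σ : StabilityCondition C) :
    (∀ E : C, IsIndec E → σ.IsSemistable E) ↔ σ.gldim ≤ 1 :=
  ⟨σ.gldim_le_one_of_totally_semistable hKS, fun hσ _ hE =>
    σ.isSemistable_of_isIndec_of_gldim_le_one hσ hE⟩
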